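/- Let x₁, x₂ : [a,b] → ℂ be twice continuously differentiable. Then for t₀ ≤ t in [a,b], x₂'(t)(x₁(t) - x₁(t₀)) - x₁'(t)(x₂(t) - x₂(t₀)) = ∫₀^{t-t₀} ∫₀^{s} [x₂''(t₀+s) x₁'(t₀+η) - x₁''(t₀+s) x₂'(t₀+η)] dη ds. -/

import Mathlib

open intervalIntegral

/-!
With `F s = y₂' s * (y₁ s - y₁ c) - y₁' s * (y₂ s - y₂ c)` we have `F c = 0`, and in `F'` the
products `y₂' * y₁'` cancel, leaving `y₂'' s * (y₁ s - y₁ c) - y₁'' s * (y₂ s - y₂ c)`, which by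
the fundamental theorem of calculus is the inner integral over `[c, s]`. Integrating `F'` over
`[c, T]` gives the identity; the statement is the case `c = 0` for the curves shifted by `t₀`.
-/

section

variable {𝕜 : Type*} [RCLike 𝕜] {c T : ℝ}

theorem integral_const_mul_sub_const_mul {y₁ y₂ y₁' y₂' : ℝ → 𝕜}
    (hd₁ : ∀ u ∈ Set.Icc c T, HasDerivAt y₁ (y₁' u) u)
    (hd₂ : ∀ u ∈ Set.Icc c T, HasDerivAt y₂ (y₂' u) u)
    (hc₁ : ContinuousOn y₁' (Set.Icc c T)) (hc₂ : ContinuousOn y₂' (Set.Icc c T))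
    (A B : 𝕜) {s : ℝ} (hs : s ∈ Set.Icc c T) :
    ∫ η in c..s, (A * y₁' η - B * y₂' η) = A * (y₁ s - y₁ c) - B * (y₂ s - y₂ c) := by
  have hsub : Set.uIcc c s ⊆ Set.Icc c T := by
    rw [Set.uIcc_of_le hs.1]; exact Set.Icc_subset_Icc_right hs.2
  have hi₁ : IntervalIntegrable y₁' MeasureTheory.volume c s :=
    (hc₁.mono hsub).intervalIntegrable
  have hi₂ : IntervalIntegrable y₂' MeasureTheory.volume c s :=
    (hc₂.mono hsub).intervalIntegrable
  rw [integral_sub (hi₁.const_mul A) (hi₂.const_mul B), integral_const_mul, integral_const_mul,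
    integral_eq_sub_of_hasDerivAt (fun u hu => hd₁ u (hsub hu)) hi₁,
    integral_eq_sub_of_hasDerivAt (fun u hu => hd₂ u (hsub hu)) hi₂]

theorem hasDerivAt_cross_sub {y₁ y₂ y₁' y₂' y₁'' y₂'' : ℝ → 𝕜} {s : ℝ}
    (hd₁ : HasDerivAt y₁ (y₁' s) s) (hd₂ : HasDerivAt y₂ (y₂' s) s)
    (hdd₁ : HasDerivAt y₁' (y₁'' s) s) (hdd₂ : HasDerivAt y₂' (y₂'' s) s) (p₁ p₂ : 𝕜) :
    HasDerivAt (fun u => y₂' u * (y₁ u - p₁) - y₁' u * (y₂ u - p₂))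
      (y₂'' s * (y₁ s - p₁) - y₁'' s * (y₂ s - p₂)) s := by
  refine ((hdd₂.mul (hd₁.sub_const p₁)).sub (hdd₁.mul (hd₂.sub_const p₂))).congr_deriv ?_
  ring

theorem cross_sub_eq_integral_integral {y₁ y₂ y₁' y₂' y₁'' y₂'' : ℝ → 𝕜}
    (hd₁ : ∀ u ∈ Set.Icc c T, HasDerivAt y₁ (y₁' u) u)
    (hd₂ : ∀ u ∈ Set.Icc c T, HasDerivAt y₂ (y₂' u) u)
    (hdd₁ : ∀ u ∈ Set.Icc c T, HasDerivAt y₁' (y₁'' u) u)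
    (hdd₂ : ∀ u ∈ Set.Icc c T, HasDerivAt y₂' (y₂'' u) u)
    (hc₁ : ContinuousOn y₁'' (Set.Icc c T)) (hc₂ : ContinuousOn y₂'' (Set.Icc c T))
    (hcT : c ≤ T) :
    y₂' T * (y₁ T - y₁ c) - y₁' T * (y₂ T - y₂ c) =
      ∫ s in c..T, ∫ η in c..s, (y₂'' s * y₁' η - y₁'' s * y₂' η) := by
  have hcont : ∀ {f f' : ℝ → 𝕜}, (∀ u ∈ Set.Icc c T, HasDerivAt f (f' u) u) →
      ContinuousOn f (Set.Icc c T) := fun hf =>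
    continuousOn_of_forall_continuousAt fun u hu => (hf u hu).continuousAt
  have huIcc : Set.uIcc c T = Set.Icc c T := Set.uIcc_of_le hcT
  have hinner : Set.EqOn (fun s => ∫ η in c..s, (y₂'' s * y₁' η - y₁'' s * y₂' η))
      (fun s => y₂'' s * (y₁ s - y₁ c) - y₁'' s * (y₂ s - y₂ c)) (Set.uIcc c T) := fun s hs =>
    integral_const_mul_sub_const_mul hd₁ hd₂ (hcont hdd₁) (hcont hdd₂) _ _ (huIcc ▸ hs)
  have hderiv : ∀ s ∈ Set.uIcc c T,
      HasDerivAt (fun u => y₂' u * (y₁ u - y₁ c) - y₁' u * (y₂ u - y₂ c))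
        (y₂'' s * (y₁ s - y₁ c) - y₁'' s * (y₂ s - y₂ c)) s := fun s hs => by
    rw [huIcc] at hs
    exact hasDerivAt_cross_sub (hd₁ s hs) (hd₂ s hs) (hdd₁ s hs) (hdd₂ s hs) _ _
  have hint : IntervalIntegrable (fun s => y₂'' s * (y₁ s - y₁ c) - y₁'' s * (y₂ s - y₂ c))
      MeasureTheory.volume c T := by
    apply ContinuousOn.intervalIntegrable
    rw [huIcc]
    exact (hc₂.mul ((hcont hd₁).sub continuousOn_const)).sub
      (hc₁.mul ((hcont hd₂).sub continuousOn_const))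
  rw [integral_congr hinner, integral_eq_sub_of_hasDerivAt hderiv hint]
  simp

end

/-- The double-integral representation (eq:eval:kappa) of the
stabilized double-layer kernel numerator: for twice continuously
differentiable `x₁, x₂ : [a,b] → ℂ` and `t₀ ≤ t` in `[a,b]`,
`x₂'(t)(x₁(t)-x₁(t₀)) - x₁'(t)(x₂(t)-x₂(t₀))
  = ∫₀^{t-t₀} ∫₀^s [x₂''(t₀+s)x₁'(t₀+η) - x₁''(t₀+s)x₂'(t₀+η)] dη ds`. -/
theorem stmt11 (a b : ℝ) (x₁ x₂ x₁' x₂' x₁'' x₂'' : ℝ → ℂ)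
    (hd₁ : ∀ t ∈ Set.Icc a b, HasDerivAt x₁ (x₁' t) t)
    (hd₂ : ∀ t ∈ Set.Icc a b, HasDerivAt x₂ (x₂' t) t)
    (hdd₁ : ∀ t ∈ Set.Icc a b, HasDerivAt x₁' (x₁'' t) t)
    (hdd₂ : ∀ t ∈ Set.Icc a b, HasDerivAt x₂' (x₂'' t) t)
    (hc₁ : ContinuousOn x₁'' (Set.Icc a b))
    (hc₂ : ContinuousOn x₂'' (Set.Icc a b)) :
    ∀ t₀ ∈ Set.Icc a b, ∀ t ∈ Set.Icc a b, t₀ ≤ t →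
      x₂' t * (x₁ t - x₁ t₀) - x₁' t * (x₂ t - x₂ t₀) =
        ∫ s in (0:ℝ)..(t - t₀), ∫ η in (0:ℝ)..s,
          (x₂'' (t₀ + s) * x₁' (t₀ + η) - x₁'' (t₀ + s) * x₂' (t₀ + η)) := by
  intro t₀ ht₀ t ht htt
  have hmaps : Set.MapsTo (t₀ + ·) (Set.Icc 0 (t - t₀)) (Set.Icc a b) := fun s hs =>
    ⟨by linarith [ht₀.1, hs.1], by linarith [ht.2, hs.2]⟩
  have hshift : ∀ {f f' : ℝ → ℂ}, (∀ u ∈ Set.Icc a b, HasDerivAt f (f' u) u) →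
      ∀ s ∈ Set.Icc 0 (t - t₀), HasDerivAt (fun s => f (t₀ + s)) (f' (t₀ + s)) s :=
    fun hf s hs => (hf _ (hmaps hs)).comp_const_add t₀ s
  have key := cross_sub_eq_integral_integral (hshift hd₁) (hshift hd₂) (hshift hdd₁)
    (hshift hdd₂) (hc₁.comp (continuous_const_add t₀).continuousOn hmaps)
    (hc₂.comp (continuous_const_add t₀).continuousOn hmaps) (sub_nonneg.2 htt)
  simpa using key
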